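/- arXiv:1405.6333 — 3 statements merged into one kernel-verified Lean document; each statement's English description precedes it below -/
import Mathlib

section
/- For every measurable set A ⊆ ℝ^d, bounded open set W, u ∈ S^{d−1}, and ε ∈ ℝ nonzero, one has ∫_{W⊖[0,εu]} |1_A(x+εu) − 1_A(x)| dx = |ε| · σ_{εu;W}(A), where σ is the explicit linear combination of four local covariogram values. -/
open MeasureTheory Set Filter Topology Bornology Pointwise
open scoped ENNReal

noncomputable section

/-- Euclidean space ℝ^d. -/
abbrev Euc (d : ℕ) := EuclideanSpace ℝ (Fin d)

/-- Translate of a set: `y + A = {y + a : a ∈ A}`. -/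
def tset {d : ℕ} (y : Euc d) (A : Set (Euc d)) : Set (Euc d) :=
  (fun x => y + x) '' A

/-- Local covariogram `δ_{y;W}(A) = L^d(A ∩ (y+A) ∩ W)`. -/
def cov {d : ℕ} (A : Set (Euc d)) (y : Euc d) (W : Set (Euc d)) : ℝ :=
  (volume (A ∩ tset y A ∩ W)).toReal

/-- Minkowski difference of `U` with the segment `[0, v]`:
`U ⊖ [0,v] = {x : x + t • v ∈ U for all t ∈ [0,1]}`. -/
def mdiff {d : ℕ} (U : Set (Euc d)) (v : Euc d) : Set (Euc d) :=
  {x | ∀ t : ℝ, t ∈ Set.Icc (0:ℝ) 1 → x + t • v ∈ U}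

/-- `σ_{v;W}(A)`, a normalized linear combination of four local covariograms. -/
def sig {d : ℕ} (A : Set (Euc d)) (v : Euc d) (W : Set (Euc d)) : ℝ :=
  (1 / ‖v‖) * (cov A 0 (mdiff W (-v)) - cov A v (mdiff W (-v))
    + cov A 0 (mdiff W v) - cov A (-v) (mdiff W v))

/-- Directional variation `V_u(f;U)` of a function `f` in direction `u` in the open set `U`. -/
def dirVar {d : ℕ} (u : Euc d) (f : Euc d → ℝ) (U : Set (Euc d)) : ℝ≥0∞ :=
  ⨆ φ ∈ {φ : Euc d → ℝ | ContDiff ℝ 1 φ ∧ HasCompactSupport φ ∧ tsupport φ ⊆ U ∧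
      ∀ x, |φ x| ≤ 1},
    ENNReal.ofReal (∫ x in U, f x * fderiv ℝ φ x u)

/-- The canonical basis vector `e j` of ℝ^d. -/
def ebase {d : ℕ} (j : Fin d) : Euc d := EuclideanSpace.single j (1:ℝ)

/-- Variational (isotropic) perimeter `Per(A;U)`. -/
def per {d : ℕ} (A U : Set (Euc d)) : ℝ≥0∞ :=
  ⨆ φ ∈ {φ : Euc d → Euc d | ContDiff ℝ 1 φ ∧ HasCompactSupport φ ∧ tsupport φ ⊆ U ∧
      ∀ x, ‖φ x‖ ≤ 1},
    ENNReal.ofReal (∫ x in U,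
      A.indicator (fun _ => (1:ℝ)) x * ∑ i : Fin d, fderiv ℝ φ x (ebase i) i)

/-- Anisotropic perimeter `Per_B(A;U) = Σ_j V_{e_j}(A;U)`. -/
def perB {d : ℕ} (A U : Set (Euc d)) : ℝ≥0∞ :=
  ∑ j : Fin d, dirVar (ebase j) (A.indicator (fun _ => (1:ℝ))) U

/-- The open unit cube `(0,1)^d`. -/
def unitCube (d : ℕ) : Set (Euc d) := {x | ∀ i, 0 < x i ∧ x i < 1}

/-- An observation window: bounded open set with Lebesgue-negligible boundary. -/
def Window {d : ℕ} (W : Set (Euc d)) : Prop :=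
  IsOpen W ∧ IsBounded W ∧ volume (frontier W) = 0

/-- The σ-algebra on measurable sets of ℝ^d corresponding to local convergence in measure
(generated by the local volume evaluations on bounded measurable sets). -/
def ramsMS (d : ℕ) : MeasurableSpace (Set (Euc d)) :=
  MeasurableSpace.generateFrom
    {S | ∃ (B : Set (Euc d)) (t : ℝ≥0∞), MeasurableSet B ∧ IsBounded B ∧
      S = {A : Set (Euc d) | volume (A ∩ B) ≤ t}}

/-- One-dimensional variational perimeter. -/
def per1 (A U : Set ℝ) : ℝ≥0∞ :=
  ⨆ φ ∈ {φ : ℝ → ℝ | ContDiff ℝ 1 φ ∧ HasCompactSupport φ ∧ tsupport φ ⊆ U ∧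
      ∀ x, |φ x| ≤ 1},
    ENNReal.ofReal (∫ x in U, A.indicator (fun _ => (1:ℝ)) x * deriv φ x)

/-- `γ` is M-local covariogram admissible: positivity of linear combinations of local
covariograms over all measurable sets transfers to `γ`. -/
def MAdmissible {d : ℕ} (γ : Euc d → Set (Euc d) → ℝ) : Prop :=
  ∀ (q : ℕ) (a : Fin q → ℝ) (y : Fin q → Euc d) (W : Fin q → Set (Euc d)) (c : ℝ),
    (∀ i, Window (W i)) →
    (∀ A : Set (Euc d), MeasurableSet A → 0 ≤ c + ∑ i, a i * cov A (y i) (W i)) →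
    0 ≤ c + ∑ i, a i * γ (y i) (W i)

/-- `γ` is F-local covariogram admissible: positivity tested on closed sets only. -/
def FAdmissible {d : ℕ} (γ : Euc d → Set (Euc d) → ℝ) : Prop :=
  ∀ (q : ℕ) (a : Fin q → ℝ) (y : Fin q → Euc d) (W : Fin q → Set (Euc d)) (c : ℝ),
    (∀ i, Window (W i)) →
    (∀ F : Set (Euc d), IsClosed F → 0 ≤ c + ∑ i, a i * cov F (y i) (W i)) →
    0 ≤ c + ∑ i, a i * γ (y i) (W i)

/-- The analogue `σ_γ(u;W)` of `σ` for a covariogram candidate function `γ`. -/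
def sigGamma {d : ℕ} (γ : Euc d → Set (Euc d) → ℝ) (u : Euc d) (W : Set (Euc d)) : ℝ :=
  (1 / ‖u‖) * (γ 0 (mdiff W (-u)) - γ u (mdiff W (-u))
    + γ 0 (mdiff W u) - γ (-u) (mdiff W u))

/-- `L_j(γ,W) = sup_{ε ∈ ℝ} σ_γ(ε e_j; W)` (valued in `[0,∞]`). -/
def Lconst {d : ℕ} (γ : Euc d → Set (Euc d) → ℝ) (j : Fin d) (W : Set (Euc d)) : ℝ≥0∞ :=
  ⨆ ε : ℝ, ENNReal.ofReal (sigGamma γ (ε • ebase j) W)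

/-- The grid cell `C^n_k = k/n + [0,1/n]^d`. -/
def cell {d : ℕ} (n : ℕ) (k : Fin d → ℤ) : Set (Euc d) :=
  {x | ∀ i, (k i : ℝ) / n ≤ x i ∧ x i ≤ (k i : ℝ) / n + 1 / n}

/-- The closed ℓ∞ hypercube of center `z` and half side length `ρ`. -/
def hcube {d : ℕ} (z : Euc d) (ρ : ℝ) : Set (Euc d) :=
  {x | ∀ i, |x i - z i| ≤ ρ}

/-- The open cube `U_n = (-n,n)^d`. -/
def cubeU {d : ℕ} (n : ℕ) : Set (Euc d) := {x | ∀ i, |x i| < (n : ℝ)}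

end

/-! With `v = ε • u` and `P = A - v`, the integrand is `1_{P ∆ A}`, so the left-hand side is
the sum of the volumes of `P \ A` and `A \ P` inside `W ⊖ [0,v]`. Translation by `v` carries
`W ⊖ [0,v]` onto `W ⊖ [-v,0]` and turns the two covariograms on `W ⊖ [-v,0]` into the volumes
of `P` and `P ∩ A` inside `W ⊖ [0,v]`; the four terms of `‖v‖ σ_{v;W}(A)` then combine into
the same two differences. -/

open scoped symmDiff

section MeasureAlgebra

variable {α : Type*} [MeasurableSpace α] (μ : Measure α) {S T U : Set α}

lemma measureReal_inter_sub_inter_inter (hT : MeasurableSet T) (hU : μ U ≠ ∞) :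
    μ.real (S ∩ U) - μ.real (S ∩ T ∩ U) = μ.real (S \ T ∩ U) := by
  rw [← measureReal_inter_add_sdiff (s := S ∩ U) hT
      (measure_ne_top_of_subset inter_subset_right hU), inter_right_comm, add_sub_cancel_left, inter_sdiff_right_comm]

lemma measureReal_symmDiff_inter (hS : MeasurableSet S) (hT : MeasurableSet T) (hU : μ U ≠ ∞) :
    μ.real (S ∆ T ∩ U) =
      μ.real (S ∩ U) - μ.real (S ∩ T ∩ U) + (μ.real (T ∩ U) - μ.real (T ∩ S ∩ U)) := by
  rw [measureReal_inter_sub_inter_inter μ hT hU, measureReal_inter_sub_inter_inter μ hS hU,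
    ← measureReal_inter_add_sdiff (s := S ∆ T ∩ U) hS
      (measure_ne_top_of_subset inter_subset_right hU)]
  congr 2 <;> ext x <;> by_cases x ∈ S <;> by_cases x ∈ T <;> simp [mem_symmDiff, *]

lemma setIntegral_abs_indicator_sub_indicator (hS : MeasurableSet S) (hT : MeasurableSet T) :
    ∫ x in U, |S.indicator (fun _ => (1 : ℝ)) x - T.indicator (fun _ => (1 : ℝ)) x| ∂μ =
      μ.real (S ∆ T ∩ U) := by
  simp_rw [← abs_indicator_symmDiff, abs_of_nonneg (indicator_nonneg (fun _ _ => zero_le_one) _)]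
  rw [integral_indicator_const _ (hS.symmDiff hT), measureReal_restrict_apply (hS.symmDiff hT),
    smul_eq_mul, mul_one]

end MeasureAlgebra

section Translation

variable {d : ℕ}

lemma tset_eq_preimage (y : Euc d) (A : Set (Euc d)) : tset y A = (· - y) ⁻¹' A := by
  simp_rw [tset, image_add_left, neg_add_eq_sub]

@[simp]
lemma tset_zero (A : Set (Euc d)) : tset 0 A = A := by
  simp [tset_eq_preimage]

lemma tset_preimage_add_right (v : Euc d) (A : Set (Euc d)) : tset v ((· + v) ⁻¹' A) = A := by
  ext x
  simp [tset_eq_preimage]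

lemma tset_neg (v : Euc d) (A : Set (Euc d)) : tset (-v) A = (· + v) ⁻¹' A := by
  simp [tset_eq_preimage]

lemma preimage_add_right_tset (y v : Euc d) (A : Set (Euc d)) :
    (· + v) ⁻¹' tset y A = tset y ((· + v) ⁻¹' A) := by
  ext x
  simp [tset_eq_preimage, sub_add_eq_add_sub]

lemma cov_preimage_add_right (A : Set (Euc d)) (y v : Euc d) (W : Set (Euc d)) :
    cov ((· + v) ⁻¹' A) y ((· + v) ⁻¹' W) = cov A y W := by
  rw [cov, cov, ← preimage_add_right_tset, ← preimage_inter, ← preimage_inter,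
    measure_preimage_add_right]

lemma preimage_add_right_mdiff_neg (W : Set (Euc d)) (v : Euc d) :
    (· + v) ⁻¹' mdiff W (-v) = mdiff W v := by
  have key : ∀ (x : Euc d) (t : ℝ), x + v + t • -v = x + (1 - t) • v := fun x t => by module
  ext x
  simp only [mdiff, mem_preimage, mem_ofPred_eq, key, mem_Icc]
  constructor
  · intro h t ht
    simpa using h (1 - t) ⟨by linarith, by linarith⟩
  · intro h t ht
    exact h (1 - t) ⟨by linarith, by linarith⟩

lemma mdiff_subset (W : Set (Euc d)) (v : Euc d) : mdiff W v ⊆ W := fun x hx => by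
  simpa using hx 0 ⟨le_rfl, zero_le_one⟩

end Translation

lemma setIntegral_mdiff_abs_indicator_sub {d : ℕ} {A W : Set (Euc d)} (hA : MeasurableSet A)
    (hW : IsBounded W) (v : Euc d) :
    ∫ x in mdiff W v, |A.indicator (fun _ => (1 : ℝ)) (x + v) - A.indicator (fun _ => 1) x| =
      cov A 0 (mdiff W (-v)) - cov A v (mdiff W (-v)) + cov A 0 (mdiff W v) -
        cov A (-v) (mdiff W v) := by
  set P := (· + v) ⁻¹' A
  have hP : MeasurableSet P := hA.preimage (measurable_add_const v)
  have hU : volume (mdiff W v) ≠ ∞ :=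
    measure_ne_top_of_subset (mdiff_subset W v) hW.measure_lt_top.ne
  calc ∫ x in mdiff W v, |A.indicator (fun _ => (1 : ℝ)) (x + v) - A.indicator (fun _ => 1) x|
      = volume.real (P ∆ A ∩ mdiff W v) := setIntegral_abs_indicator_sub_indicator _ hP hA
    _ = volume.real (P ∩ mdiff W v) - volume.real (P ∩ A ∩ mdiff W v) +
          (volume.real (A ∩ mdiff W v) - volume.real (A ∩ P ∩ mdiff W v)) :=
        measureReal_symmDiff_inter _ hP hA hU
    _ = _ := by
      rw [← cov_preimage_add_right A 0 v, ← cov_preimage_add_right A v v,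
        preimage_add_right_mdiff_neg]
      simp only [cov, ← measureReal_def, tset_zero, tset_neg, tset_preimage_add_right, inter_self]
      ring

lemma norm_mul_sig {d : ℕ} (A : Set (Euc d)) (v : Euc d) (W : Set (Euc d)) :
    ‖v‖ * sig A v W = cov A 0 (mdiff W (-v)) - cov A v (mdiff W (-v)) + cov A 0 (mdiff W v) -
      cov A (-v) (mdiff W v) := by
  rcases eq_or_ne v 0 with rfl | hv
  · simp
  · rw [sig, ← mul_assoc, mul_one_div_cancel (norm_ne_zero_iff.mpr hv), one_mul]

theorem integral_indicator_diff_eq_sigma_general {d : ℕ} (A : Set (Euc d)) (hA : MeasurableSet A)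
    (W : Set (Euc d)) (hWbdd : IsBounded W)
    (u : Euc d) (hu : ‖u‖ = 1) (ε : ℝ) :
    (∫ x in mdiff W (ε • u),
        |A.indicator (fun _ => (1:ℝ)) (x + ε • u) - A.indicator (fun _ => (1:ℝ)) x|) =
      |ε| * sig A (ε • u) W := by
  have hnorm : ‖ε • u‖ = |ε| := by rw [norm_smul, hu, Real.norm_eq_abs, mul_one]
  rw [← hnorm, norm_mul_sig, setIntegral_mdiff_abs_indicator_sub hA hWbdd]

/-- For `A` measurable, `W` bounded open, `u` a unit vector and `ε ≠ 0`,
`∫_{W⊖[0,εu]} |1_A(x+εu) − 1_A(x)| dx = |ε| · σ_{εu;W}(A)`. -/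
theorem integral_indicator_diff_eq_sigma {d : ℕ} (A : Set (Euc d)) (hA : MeasurableSet A)
    (W : Set (Euc d)) (hWopen : IsOpen W) (hWbdd : IsBounded W)
    (u : Euc d) (hu : ‖u‖ = 1) (ε : ℝ) (hε : ε ≠ 0) :
    (∫ x in mdiff W (ε • u),
        |A.indicator (fun _ => (1:ℝ)) (x + ε • u) - A.indicator (fun _ => (1:ℝ)) x|) =
      |ε| * sig A (ε • u) W :=
  integral_indicator_diff_eq_sigma_general A hA W hWbdd u hu ε
end

section
/- Let μ be a random signed Radon measure on an open set U ⊆ ℝ^d defined on a probability space (Ω, A, P), such that for every ω the measure μ(ω,·) is absolutely continuous with respect to Lebesgue measure. Then there exists a jointly measurable function f : Ω × U → ℝ (measurable for the product σ-algebra A ⊗ B(U)) such that for every ω, f(ω,·) is a Radon–Nikodym derivative of μ(ω,·) with respect to Lebesgue measure. -/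
open MeasureTheory Set Filter Topology Bornology Pointwise
open scoped ENNReal

/-!
Exhausting `U` by compact sets upgrades the measurability of `ω ↦ μ ω B` from relatively compact
`B ⊆ U` to all Borel `B`. The positive part of a signed measure `s` is
`B ↦ ⨆ A ∈ 𝒜, s (A ∩ B)` for any family `𝒜` dense in the measure algebra of `|s|`, and on a
countably generated space one countable set algebra `𝒜` serves every `s`; hence the Jordan parts of
`μ ω` are measurable families of finite measures. After normalisation these are finite kernels,
whose Radon–Nikodym derivatives with respect to a fixed finite measure equivalent to Lebesgue
measure are jointly measurable (`Kernel.rnDeriv`). Their difference is the required density.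
-/

open scoped symmDiff

namespace MeasureTheory

namespace SignedMeasure

section Topological

variable {Ω X : Type*} [MeasurableSpace Ω] [MeasurableSpace X] [TopologicalSpace X]
  [T2Space X] [OpensMeasurableSpace X]

theorem measurable_apply_of_isSigmaCompact {μ : Ω → SignedMeasure X} {U : Set X}
    (hU : IsSigmaCompact U) (hsupp : ∀ ω s, MeasurableSet s → s ⊆ Uᶜ → μ ω s = 0)
    (hmeas : ∀ B, MeasurableSet B → B ⊆ U → IsCompact (closure B) →
      Measurable fun ω => μ ω B)
    {B : Set X} (hB : MeasurableSet B) : Measurable fun ω => μ ω B := by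
  obtain ⟨K, hK, rfl⟩ := hU
  have hKm : ∀ n, MeasurableSet (K n) := fun n => (hK n).isClosed.measurableSet
  set D := disjointed fun n => B ∩ K n
  have hDm : ∀ n, MeasurableSet (D n) := .disjointed fun n => hB.inter (hKm n)
  have hDK : ∀ n, D n ⊆ K n := fun n => (disjointed_subset _ n).trans inter_subset_right
  have hD_union : ⋃ n, D n = B ∩ ⋃ n, K n := by rw [iUnion_disjointed, inter_iUnion]
  have hsum : ∀ ω, HasSum (fun n => μ ω (D n)) (μ ω B) := fun ω => by
    have hU := MeasurableSet.iUnion hKm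
    have hout : μ ω (B \ ⋃ n, K n) = 0 := hsupp ω _ (hB.diff hU) fun x hx => hx.2
    rw [← VectorMeasure.of_add_of_sdiff (hB.inter hU) hB inter_subset_left, sdiff_self_inter,
      hout, add_zero, ← hD_union]
    exact (μ ω).m_iUnion hDm (disjoint_disjointed _)
  refine measurable_of_tendsto_metrizable' atTop (fun n => Finset.measurable_sum _ fun i _ => ?_)
    (tendsto_pi_nhds.2 fun ω => (hsum ω).tendsto_sum_nat)
  exact hmeas _ (hDm i) ((hDK i).trans (subset_iUnion K i))
    ((hK i).of_isClosed_subset isClosed_closure (closure_minimal (hDK i) (hK i).isClosed))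

end Topological

variable {Ω X : Type*} [MeasurableSpace Ω] [MeasurableSpace X]

theorem sub_le_totalVariation_real_symmDiff (s : SignedMeasure X) {T S : Set X}
    (hT : MeasurableSet T) (hS : MeasurableSet S) :
    s T - s S ≤ s.totalVariation.real (T ∆ S) := by
  have split : ∀ {A B : Set X}, MeasurableSet A → MeasurableSet B →
      s A = s (A ∩ B) + s (A \ B) := fun {A B} hA hB => by
    conv_lhs => rw [← inter_union_sdiff A B]
    exact VectorMeasure.of_union disjoint_sdiff_inter.symm (hA.inter hB) (hA.diff hB)
  have hTS := split hT hS
  have hST := split hS hT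
  rw [inter_comm] at hST
  have hTS_le := (le_abs_self _).trans (s.norm_le_totalVariation (T \ S))
  have hST_le := (neg_le_abs _).trans (s.norm_le_totalVariation (S \ T))
  rw [Set.symmDiff_def, measureReal_union disjoint_sdiff_sdiff (hS.diff hT)]
  linarith

theorem posPart_apply_eq_iSup (s : SignedMeasure X) {𝒜 : Set (Set X)}
    (h𝒜 : s.totalVariation.MeasureDense 𝒜) {B : Set X} (hB : MeasurableSet B) :
    s.toJordanDecomposition.posPart B = ⨆ A ∈ 𝒜, ENNReal.ofReal (s (A ∩ B)) := by
  obtain ⟨i, hi, hi_pos, -, hpos, -⟩ := s.toJordanDecomposition_spec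
  have hposB : s.toJordanDecomposition.posPart B = ENNReal.ofReal (s (i ∩ B)) := by
    rw [← ofReal_measureReal (measure_ne_top _ _), hpos,
      toMeasureOfZeroLE_real_apply _ hi_pos hi hB]
  refine le_antisymm ?_ (iSup₂_le fun A hA => ?_)
  · refine hposB ▸ ENNReal.le_of_forall_pos_le_add fun ε hε _ => ?_
    obtain ⟨A, hA, hAε⟩ := h𝒜.approx (i ∩ B) (hi.inter hB) (measure_ne_top _ _) ε hε
    have hsub : (i ∩ B) ∆ (A ∩ B) ⊆ (i ∩ B) ∆ A := by
      intro x; simp only [mem_symmDiff, mem_inter_iff]; tauto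
    have hclose : s (i ∩ B) ≤ s (A ∩ B) + ε := by
      have hdiff := s.sub_le_totalVariation_real_symmDiff (hi.inter hB)
        ((h𝒜.measurable A hA).inter hB)
      have hmono := measureReal_mono (μ := s.totalVariation) hsub
      have hsmall : s.totalVariation.real ((i ∩ B) ∆ A) < ε :=
        ENNReal.toReal_lt_of_lt_ofReal hAε
      linarith
    calc ENNReal.ofReal (s (i ∩ B)) ≤ ENNReal.ofReal (s (A ∩ B)) + ENNReal.ofReal ε :=
          (ENNReal.ofReal_le_ofReal hclose).trans ENNReal.ofReal_add_le
      _ ≤ (⨆ A ∈ 𝒜, ENNReal.ofReal (s (A ∩ B))) + ε := by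
          rw [ENNReal.ofReal_coe_nnreal]
          gcongr
          exact le_iSup₂ (f := fun A (_ : A ∈ 𝒜) => ENNReal.ofReal (s (A ∩ B))) A hA
  · refine ENNReal.ofReal_le_of_le_toReal ?_
    rw [s.apply_eq_posPart_real_sub_negPart_real ((h𝒜.measurable A hA).inter hB)]
    have hpos_mono : s.toJordanDecomposition.posPart.real (A ∩ B) ≤
        s.toJordanDecomposition.posPart.real B := measureReal_mono inter_subset_right
    have hneg_nonneg : 0 ≤ s.toJordanDecomposition.negPart.real (A ∩ B) := measureReal_nonneg
    rw [← measureReal_def]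
    linarith

theorem measurable_posPart_apply [MeasurableSpace.CountablyGenerated X]
    {μ : Ω → SignedMeasure X} (hμ : ∀ B, MeasurableSet B → Measurable fun ω => μ ω B)
    {B : Set X} (hB : MeasurableSet B) :
    Measurable fun ω => (μ ω).toJordanDecomposition.posPart B := by
  set 𝒜 := generateSetAlgebra (MeasurableSpace.countableGeneratingSet X)
  have hgen : ‹MeasurableSpace X› = .generateFrom 𝒜 := by
    rw [generateFrom_generateSetAlgebra_eq, MeasurableSpace.generateFrom_countableGeneratingSet]
  have h𝒜 : ∀ ω, (μ ω).totalVariation.MeasureDense 𝒜 := fun ω =>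
    .of_generateFrom_isSetAlgebra_finite _ isSetAlgebra_generateSetAlgebra hgen
  have h𝒜m : ∀ A ∈ 𝒜, MeasurableSet A := fun A hA =>
    hgen ▸ MeasurableSpace.measurableSet_generateFrom hA
  simp_rw [fun ω => (μ ω).posPart_apply_eq_iSup (h𝒜 ω) hB]
  exact .biSup _ (countable_generateSetAlgebra MeasurableSpace.countable_countableGeneratingSet)
    fun A hA => (hμ _ ((h𝒜m A hA).inter hB)).ennreal_ofReal

theorem measurable_negPart_apply [MeasurableSpace.CountablyGenerated X]
    {μ : Ω → SignedMeasure X} (hμ : ∀ B, MeasurableSet B → Measurable fun ω => μ ω B)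
    {B : Set X} (hB : MeasurableSet B) :
    Measurable fun ω => (μ ω).toJordanDecomposition.negPart B := by
  simp_rw [← JordanDecomposition.neg_posPart, ← toJordanDecomposition_neg]
  exact measurable_posPart_apply (fun B hB => (hμ B hB).neg) hB

end SignedMeasure

namespace Measure

open ProbabilityTheory

variable {Ω X : Type*} [MeasurableSpace Ω] [MeasurableSpace X]
  [MeasurableSpace.CountableOrCountablyGenerated Ω X]

theorem exists_measurable_rnDeriv_of_isFiniteMeasure (m : Ω → Measure X)
    [∀ ω, IsFiniteMeasure (m ω)] (hm : ∀ B, MeasurableSet B → Measurable fun ω => m ω B)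
    (ν : Measure X) [IsFiniteMeasure ν] :
    ∃ F : Ω × X → ℝ≥0∞, Measurable F ∧
      ∀ ω, (fun x => F (ω, x)) =ᵐ[ν] (m ω).rnDeriv ν := by
  set c : Ω → ℝ≥0∞ := fun ω => m ω univ + 1
  have hc : Measurable c := (hm _ .univ).add_const 1
  -- `Kernel.rnDeriv` needs a finite kernel, hence the normalisation by `c`.
  let κ : Kernel Ω X := ⟨fun ω => (c ω)⁻¹ • m ω, Measure.measurable_of_measurable_coe _
    fun B hB => by
      simp only [smul_apply, smul_eq_mul]; exact hc.inv.mul (hm B hB)⟩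
  have : IsFiniteKernel κ := ⟨1, ENNReal.one_lt_top, fun ω => by
    simp only [κ, Kernel.coe_mk, smul_apply, smul_eq_mul]
    rw [ENNReal.inv_mul_le_iff (by simp [c]) (by simp [c]), mul_one]
    exact le_self_add⟩
  refine ⟨fun p => c p.1 * κ.rnDeriv (Kernel.const Ω ν) p.1 p.2,
    (hc.comp measurable_fst).mul (Kernel.measurable_rnDeriv _ _), fun ω => ?_⟩
  have hm_eq : m ω = c ω • κ ω := by
    simp only [κ, Kernel.coe_mk, smul_smul]
    rw [ENNReal.mul_inv_cancel (by simp [c]) (by simp [c]), one_smul]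
  have hκ := Kernel.rnDeriv_eq_rnDeriv_measure (κ := κ) (η := Kernel.const Ω ν) (a := ω)
  rw [Kernel.const_apply] at hκ
  rw [hm_eq]
  filter_upwards [hκ, rnDeriv_smul_left_of_ne_top (κ ω) ν (r := c ω) (by simp [c])]
    with x hx hx_smul
  simp [hx, hx_smul]

theorem exists_measurable_rnDeriv (m : Ω → Measure X)
    [∀ ω, IsFiniteMeasure (m ω)] (hm : ∀ B, MeasurableSet B → Measurable fun ω => m ω B)
    (ν : Measure X) [SigmaFinite ν] (hmν : ∀ ω, m ω ≪ ν) :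
    ∃ F : Ω × X → ℝ≥0∞, Measurable F ∧
      ∀ ω, (fun x => F (ω, x)) =ᵐ[ν] (m ω).rnDeriv ν := by
  obtain ⟨F, hF, hFm⟩ := exists_measurable_rnDeriv_of_isFiniteMeasure m hm ν.toFinite
  refine ⟨fun p => F p * ν.toFinite.rnDeriv ν p.2,
    hF.mul ((measurable_rnDeriv _ _).comp measurable_snd), fun ω => ?_⟩
  have hν := absolutelyContinuous_toFinite ν
  filter_upwards [hν.ae_le (hFm ω), rnDeriv_mul_rnDeriv (κ := ν) ((hmν ω).trans hν)]
    with x hx hx_chain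
  simpa [hx] using hx_chain

end Measure

namespace SignedMeasure

variable {Ω X : Type*} [MeasurableSpace Ω] [MeasurableSpace X]

theorem exists_measurable_rnDeriv [MeasurableSpace.CountablyGenerated X]
    (μ : Ω → SignedMeasure X) (hμ : ∀ B, MeasurableSet B → Measurable fun ω => μ ω B)
    (ν : Measure X) [SigmaFinite ν] (hμν : ∀ ω, μ ω ≪ᵥ ν.toENNRealVectorMeasure) :
    ∃ f : Ω × X → ℝ, Measurable f ∧
      ∀ ω, (fun x => f (ω, x)) =ᵐ[ν] (μ ω).rnDeriv ν := by
  have hac : ∀ ω, (μ ω).toJordanDecomposition.posPart ≪ ν ∧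
      (μ ω).toJordanDecomposition.negPart ≪ ν := fun ω => by
    have := (absolutelyContinuous_ennreal_iff _ _).1 (hμν ω)
    rwa [VectorMeasure.ennrealToMeasure_toENNRealVectorMeasure,
      totalVariation_absolutelyContinuous_iff] at this
  obtain ⟨Fpos, hFpos, hFpos_eq⟩ := Measure.exists_measurable_rnDeriv _
    (fun B hB => measurable_posPart_apply hμ hB) ν fun ω => (hac ω).1
  obtain ⟨Fneg, hFneg, hFneg_eq⟩ := Measure.exists_measurable_rnDeriv _
    (fun B hB => measurable_negPart_apply hμ hB) ν fun ω => (hac ω).2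
  refine ⟨fun p => (Fpos p).toReal - (Fneg p).toReal,
    hFpos.ennreal_toReal.sub hFneg.ennreal_toReal, fun ω => ?_⟩
  filter_upwards [hFpos_eq ω, hFneg_eq ω] with x hpos hneg
  simp [rnDeriv_def, hpos, hneg]

end SignedMeasure

end MeasureTheory

theorem random_radon_nikodym_general {d : ℕ} {Ω : Type*} [MeasurableSpace Ω]
    (U : Set (Euc d)) (hU : IsOpen U)
    (μ : Ω → MeasureTheory.SignedMeasure (Euc d))
    (hsupp : ∀ ω, ∀ s : Set (Euc d), MeasurableSet s → s ⊆ Uᶜ → μ ω s = 0)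
    (hmeas : ∀ B : Set (Euc d), MeasurableSet B → B ⊆ U → IsCompact (closure B) →
      Measurable (fun ω => μ ω B))
    (hac : ∀ ω, ∀ s : Set (Euc d), MeasurableSet s → volume s = 0 → μ ω s = 0) :
    ∃ f : Ω × Euc d → ℝ, Measurable f ∧
      ∀ ω, IntegrableOn (fun x => f (ω, x)) U volume ∧
        ∀ s : Set (Euc d), MeasurableSet s → μ ω s = ∫ x in s, f (ω, x) := by
  have hU_sigma : IsSigmaCompact U := by
    have := hU.locallyCompactSpace
    exact isSigmaCompact_iff_sigmaCompactSpace.2 inferInstance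
  have hμ : ∀ B, MeasurableSet B → Measurable fun ω => μ ω B := fun B hB =>
    SignedMeasure.measurable_apply_of_isSigmaCompact hU_sigma hsupp hmeas hB
  have hμ_ac : ∀ ω, μ ω ≪ᵥ (volume : Measure (Euc d)).toENNRealVectorMeasure := fun ω =>
    .mk fun s hs h0 => hac ω s hs <| by
      rwa [Measure.toENNRealVectorMeasure_apply_measurable hs] at h0
  obtain ⟨f, hf, hf_eq⟩ := SignedMeasure.exists_measurable_rnDeriv μ hμ volume hμ_ac
  refine ⟨f, hf, fun ω => ⟨?_, fun s hs => ?_⟩⟩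
  · exact (((μ ω).integrable_rnDeriv volume).congr (hf_eq ω).symm).integrableOn
  · rw [← SignedMeasure.withDensityᵥ_rnDeriv_eq (μ ω) volume (hμ_ac ω),
      withDensityᵥ_apply ((μ ω).integrable_rnDeriv volume) hs]
    exact integral_congr_ae (ae_restrict_of_ae (hf_eq ω).symm)

/-- Jointly measurable Radon–Nikodym derivatives for a random signed
(Radon) measure on an open set `U`, absolutely continuous with respect to Lebesgue
measure for every `ω`. -/
theorem random_radon_nikodym {d : ℕ} {Ω : Type*} [MeasurableSpace Ω]
    (P : Measure Ω) [IsProbabilityMeasure P]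
    (U : Set (Euc d)) (hU : IsOpen U)
    (μ : Ω → MeasureTheory.SignedMeasure (Euc d))
    (hsupp : ∀ ω, ∀ s : Set (Euc d), MeasurableSet s → s ⊆ Uᶜ → μ ω s = 0)
    (hmeas : ∀ B : Set (Euc d), MeasurableSet B → B ⊆ U → IsCompact (closure B) →
      Measurable (fun ω => μ ω B))
    (hac : ∀ ω, ∀ s : Set (Euc d), MeasurableSet s → volume s = 0 → μ ω s = 0) :
    ∃ f : Ω × Euc d → ℝ, Measurable f ∧
      ∀ ω, IntegrableOn (fun x => f (ω, x)) U volume ∧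
        ∀ s : Set (Euc d), MeasurableSet s → μ ω s = ∫ x in s, f (ω, x) :=
  random_radon_nikodym_general U hU μ hsupp hmeas hac
end

section
/- A function γ : ℝ^d × W → ℝ is F-local covariogram admissible (positivity tested on all closed sets) if and only if it is M-local covariogram admissible (positivity tested on all measurable sets). -/
open MeasureTheory Set Filter Topology Bornology Pointwise
open scoped ENNReal

/-!
Closed sets are measurable, which gives one direction. Conversely, fix a measurable `A` and a
bounded set `B` containing every window `W i` and its translate `-y i + W i`. Inner regularity
gives compact `Kₙ ⊆ A ∩ B` with `L^d((A ∩ B) \ Kₙ) → 0`, and `δ_{y;W}(A) - δ_{y;W}(Kₙ)` is at most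
twice that defect, so `δ_{y;W}(Kₙ) → δ_{y;W}(A)`: positivity on the closed sets `Kₙ` passes to
the limit.
-/

theorem MeasurableSet.exists_seq_isCompact_subset_tendsto_measure_sdiff {α : Type*}
    [MeasurableSpace α] [TopologicalSpace α] [OpensMeasurableSpace α] [T2Space α]
    {μ : Measure α} [μ.InnerRegularCompactLTTop] {A : Set α} (hA : MeasurableSet A)
    (hμA : μ A ≠ ∞) :
    ∃ K : ℕ → Set α, (∀ n, K n ⊆ A) ∧ (∀ n, IsCompact (K n)) ∧
      Tendsto (fun n => μ (A \ K n)) atTop (𝓝 0) := by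
  choose K hKA hKc hμK using fun n : ℕ =>
    hA.exists_isCompact_sdiff_lt hμA (ε := (n : ℝ≥0∞)⁻¹) (ENNReal.inv_ne_zero.2 (by simp))
  exact ⟨K, hKA, hKc, tendsto_of_tendsto_of_tendsto_of_le_of_le tendsto_const_nhds
    ENNReal.tendsto_inv_nat_nhds_zero (fun _ => bot_le) fun n => (hμK n).le⟩

section Covariogram

variable {d : ℕ} {A K B W : Set (Euc d)} {y : Euc d}

theorem tset_eq_vadd (y : Euc d) (A : Set (Euc d)) : tset y A = y +ᵥ A := rfl

/-- A point of `A ∩ (y + A) ∩ W` outside `K ∩ (y + K)` is itself, or is the translate of,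
a point of `(A ∩ B) \ K`. -/
theorem volume_inter_tset_inter_le_add (hWB : W ⊆ B) (hWB' : -y +ᵥ W ⊆ B) :
    volume (A ∩ tset y A ∩ W) ≤ volume (K ∩ tset y K ∩ W) + 2 * volume ((A ∩ B) \ K) := by
  set D := (A ∩ B) \ K
  have hcover : A ∩ tset y A ∩ W ⊆ (K ∩ tset y K ∩ W) ∪ D ∪ tset y D := by
    rintro x ⟨⟨hxA, a, haA, rfl⟩, hxW⟩
    by_cases hxK : y + a ∈ K
    · by_cases haK : a ∈ K
      · exact Or.inl (Or.inl ⟨⟨hxK, a, haK, rfl⟩, hxW⟩)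
      · have haB : a ∈ B := hWB' ⟨y + a, hxW, neg_add_cancel_left y a⟩
        exact Or.inr ⟨a, ⟨⟨haA, haB⟩, haK⟩, rfl⟩
    · exact Or.inl (Or.inr ⟨⟨hxA, hWB hxW⟩, hxK⟩)
  calc volume (A ∩ tset y A ∩ W)
      ≤ volume (K ∩ tset y K ∩ W) + volume D + volume (tset y D) :=
        (measure_mono hcover).trans <| (measure_union_le _ _).trans <|
          add_le_add_left (measure_union_le _ _) _
    _ = volume (K ∩ tset y K ∩ W) + 2 * volume D := by
        rw [tset_eq_vadd y D, measure_vadd, add_assoc, two_mul]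

theorem tendsto_cov_of_tendsto_volume_sdiff {K : ℕ → Set (Euc d)} (hKA : ∀ n, K n ⊆ A)
    (hWB : W ⊆ B) (hWB' : -y +ᵥ W ⊆ B) (hW : volume W ≠ ∞)
    (hK : Tendsto (fun n => volume ((A ∩ B) \ K n)) atTop (𝓝 0)) :
    Tendsto (fun n => cov (K n) y W) atTop (𝓝 (cov A y W)) := by
  have hlim : Tendsto (fun n => volume (K n ∩ tset y (K n) ∩ W)) atTop
      (𝓝 (volume (A ∩ tset y A ∩ W))) := by
    have hlower := ENNReal.Tendsto.sub (tendsto_const_nhds (x := volume (A ∩ tset y A ∩ W)))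
      (ENNReal.Tendsto.const_mul hK (Or.inr (ENNReal.ofNat_ne_top (n := 2)))) (by simp)
    rw [mul_zero, tsub_zero] at hlower
    refine tendsto_of_tendsto_of_tendsto_of_le_of_le hlower tendsto_const_nhds (fun n => ?_)
      fun n => measure_mono <| inter_subset_inter_left _ <|
        inter_subset_inter (hKA n) (image_mono (hKA n))
    exact tsub_le_iff_right.2 (volume_inter_tset_inter_le_add hWB hWB')
  exact (ENNReal.tendsto_toReal (measure_ne_top_of_subset inter_subset_right hW)).comp hlim

end Covariogram

/-- A function `γ : ℝ^d × W → ℝ` is F-local covariogram admissible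
(positivity tested on closed sets) iff it is M-local covariogram admissible (positivity
tested on measurable sets). -/
theorem FAdmissible_iff_MAdmissible {d : ℕ} (γ : Euc d → Set (Euc d) → ℝ) :
    FAdmissible γ ↔ MAdmissible γ := by
  refine ⟨fun hF q a y W c hW hM => hF q a y W c hW fun F hF => hM F hF.measurableSet,
    fun hM q a y W c hW hF => hM q a y W c hW fun A hA => ?_⟩
  set B := ⋃ i, (W i ∪ (-y i +ᵥ W i))
  have hWB : ∀ i, W i ⊆ B ∧ -y i +ᵥ W i ⊆ B := fun i =>
    union_subset_iff.1 (subset_iUnion (fun i => W i ∪ (-y i +ᵥ W i)) i)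
  have hBm : MeasurableSet B := MeasurableSet.iUnion fun i =>
    (hW i).1.measurableSet.union ((hW i).1.vadd _).measurableSet
  have hBb : IsBounded B := isBounded_iUnion.2 fun i => (hW i).2.1.union ((hW i).2.1.vadd _)
  obtain ⟨K, hKA, hKc, hK⟩ := (hA.inter hBm).exists_seq_isCompact_subset_tendsto_measure_sdiff
    (measure_ne_top_of_subset inter_subset_right (hBb.measure_lt_top (μ := volume)).ne)
  have hlim : Tendsto (fun n => c + ∑ i, a i * cov (K n) (y i) (W i)) atTop
      (𝓝 (c + ∑ i, a i * cov A (y i) (W i))) :=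
    tendsto_const_nhds.add <| tendsto_finsetSum _ fun i _ =>
      (tendsto_cov_of_tendsto_volume_sdiff (fun n => (hKA n).trans inter_subset_left)
        (hWB i).1 (hWB i).2
        (hW i).2.1.measure_lt_top.ne hK).const_mul (a i)
  exact ge_of_tendsto' hlim fun n => hF (K n) (hKc n).isClosed
end
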